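/- For every real number k and every complex number z with Im z > 0, P_k(z − 1/4) + P_k(z + 1/4) = ((2 + 2^{1−k})^2 − 2^{1−k}) · P_k(4z) − (2 + 2^{1−k}) · ( P_k(2z) + 2^{1−k} · P_k(8z) ). -/

import Mathlib

/-!
In the nome `q = e^{2πiz}` we have `P_k(z) = L(q)` with `L(q) = ∑ n^{-k} qⁿ/(1 - qⁿ)`. Splitting
`n` by parity and using `x/(1 - x) - x/(1 + x) = 2x²/(1 - x²)` on the odd terms gives the doubling
identity `L(q) + L(-q) = (2 + c) L(q²) - c L(q⁴)` with `c = 2^{1-k}`. The shifts `z ∓ 1/4` have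
nomes `∓iq`, so doubling at `iq` expresses the left side through `L(-q²)` and `L(q⁴)`, and doubling
at `q²` eliminates `L(-q²)`.
-/

open Complex Filter Topology

/-- P_k(z) = Σ_{n=1}^∞ n^{−k} · e^{2πinz}/(1 − e^{2πinz}), for real k and Im z > 0. -/
noncomputable def P (k : ℝ) (z : ℂ) : ℂ :=
  ∑' n : ℕ+, (n : ℂ) ^ (-(k : ℂ)) *
    (Complex.exp (2 * Real.pi * Complex.I * n * z) /
      (1 - Complex.exp (2 * Real.pi * Complex.I * n * z)))

noncomputable def lambertTerm (k : ℝ) (q : ℂ) (n : ℕ) : ℂ :=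
  (n : ℂ) ^ (-(k : ℂ)) * (q ^ n / (1 - q ^ n))

/-- The `n = 0` term is `0 ^ (-k) * (1 / 0) = 0`, so the sum may run over all of `ℕ`. -/
noncomputable def lambertSeries (k : ℝ) (q : ℂ) : ℂ :=
  ∑' n : ℕ, lambertTerm k q n

lemma lambertTerm_zero (k : ℝ) (q : ℂ) : lambertTerm k q 0 = 0 := by
  simp [lambertTerm]

lemma P_eq_lambertSeries (k : ℝ) (z : ℂ) :
    P k z = lambertSeries k (cexp (2 * Real.pi * I * z)) := by
  rw [P, lambertSeries, ← tsum_pnat_eq_tsum_of_eq_zero (lambertTerm_zero k _)]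
  refine tsum_congr fun n => ?_
  rw [lambertTerm, ← Complex.exp_nat_mul]
  ring_nf

lemma isBigO_natCast_cpow_neg (k : ℝ) :
    (fun n : ℕ => (n : ℂ) ^ (-(k : ℂ))) =O[atTop] fun n => ((n ^ ⌈-k⌉₊ : ℕ) : ℂ) := by
  refine Asymptotics.IsBigO.of_bound 1 ?_
  filter_upwards [eventually_ge_atTop 1] with n hn
  have hn' : (1 : ℝ) ≤ n := by exact_mod_cast hn
  rw [norm_natCast_cpow_of_pos (by omega), one_mul, Nat.cast_pow, norm_pow, norm_natCast,
    ← Real.rpow_natCast]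
  exact Real.rpow_le_rpow_of_exponent_le hn' (by simpa using Nat.le_ceil (-k))

lemma summable_lambertTerm (k : ℝ) {q : ℂ} (hq : ‖q‖ < 1) : Summable (lambertTerm k q) := by
  have hgeom : Summable fun n : ℕ => ‖(n : ℂ) ^ (-(k : ℂ)) * q ^ n‖ :=
    summable_norm_mul_geometric_of_norm_lt_one' hq (isBigO_natCast_cpow_neg k)
  have hlim : Tendsto (fun n : ℕ => (1 - q ^ n)⁻¹) cofinite (𝓝 (1 - 0)⁻¹) := by
    rw [Nat.cofinite_eq_atTop]
    exact ((tendsto_pow_atTop_nhds_zero_of_norm_lt_one hq).const_sub 1).inv₀ (by simp)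
  exact (hgeom.mul_tendsto_const hlim).congr fun n => by rw [lambertTerm, div_eq_mul_inv, mul_assoc]

lemma lambertTerm_two_mul (k : ℝ) (q : ℂ) (m : ℕ) :
    lambertTerm k q (2 * m) = 2 ^ (-(k : ℂ)) * lambertTerm k (q ^ 2) m := by
  rw [lambertTerm, lambertTerm, Nat.cast_mul, natCast_mul_natCast_cpow, pow_mul, Nat.cast_ofNat]
  ring

lemma tsum_lambertTerm_two_mul (k : ℝ) (q : ℂ) :
    ∑' m : ℕ, lambertTerm k q (2 * m) = 2 ^ (-(k : ℂ)) * lambertSeries k (q ^ 2) := by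
  simp_rw [lambertTerm_two_mul, tsum_mul_left, lambertSeries]

lemma Summable.tsum_eq_tsum_even_add_tsum_odd {E : Type*} [NormedAddCommGroup E] [CompleteSpace E]
    {f : ℕ → E} (hf : Summable f) :
    ∑' n, f n = ∑' m, f (2 * m) + ∑' m, f (2 * m + 1) :=
  (tsum_even_add_odd (hf.comp_injective (mul_right_injective₀ two_ne_zero))
    (hf.comp_injective (strictMono_id.const_mul two_pos |>.add_const 1).injective)).symm

lemma tsum_lambertTerm_two_mul_add_one (k : ℝ) {q : ℂ} (hq : ‖q‖ < 1) :
    ∑' m : ℕ, lambertTerm k q (2 * m + 1) =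
      lambertSeries k q - 2 ^ (-(k : ℂ)) * lambertSeries k (q ^ 2) := by
  rw [← tsum_lambertTerm_two_mul, lambertSeries,
    (summable_lambertTerm k hq).tsum_eq_tsum_even_add_tsum_odd]
  ring

lemma div_one_sub_add_neg_div_one_sub {K : Type*} [Field K] {x : K} (hx : x ^ 2 ≠ 1) :
    x / (1 - x) + -x / (1 - -x) = 2 * (x ^ 2 / (1 - x ^ 2)) := by
  have h1 : 1 - x ≠ 0 := fun h => hx (by linear_combination (-(1 + x)) * h)
  have h2 : 1 + x ≠ 0 := fun h => hx (by linear_combination (x - 1) * h)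
  have h3 : 1 - x ^ 2 ≠ 0 := sub_ne_zero.mpr (Ne.symm hx)
  rw [sub_neg_eq_add]
  field_simp
  ring

lemma lambertTerm_add_lambertTerm_neg_two_mul (k : ℝ) (q : ℂ) (m : ℕ) :
    lambertTerm k q (2 * m) + lambertTerm k (-q) (2 * m) =
      2 * 2 ^ (-(k : ℂ)) * lambertTerm k (q ^ 2) m := by
  rw [lambertTerm, lambertTerm, (even_two_mul m).neg_pow, ← lambertTerm, lambertTerm_two_mul]
  ring

lemma lambertTerm_add_lambertTerm_neg_two_mul_add_one (k : ℝ) {q : ℂ} (hq : ‖q‖ < 1) (m : ℕ) :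
    lambertTerm k q (2 * m + 1) + lambertTerm k (-q) (2 * m + 1) =
      2 * lambertTerm k (q ^ 2) (2 * m + 1) := by
  have hx : (q ^ (2 * m + 1)) ^ 2 ≠ 1 := by
    refine ne_of_apply_ne norm (ne_of_lt ?_)
    rw [norm_pow, norm_pow, norm_one]
    exact pow_lt_one₀ (by positivity) (pow_lt_one₀ (norm_nonneg q) hq (by omega)) two_ne_zero
  rw [lambertTerm, lambertTerm, lambertTerm, (odd_two_mul_add_one m).neg_pow, ← mul_add,
    div_one_sub_add_neg_div_one_sub hx, ← pow_mul, ← pow_mul, mul_comm 2 (2 * m + 1)]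
  ring

lemma ofReal_two_rpow_one_sub (k : ℝ) :
    (((2 : ℝ) ^ (1 - k) : ℝ) : ℂ) = 2 * (2 : ℂ) ^ (-(k : ℂ)) := by
  rw [ofReal_cpow zero_le_two]
  push_cast
  rw [sub_eq_add_neg, cpow_add _ _ two_ne_zero, cpow_one]

lemma lambertSeries_add_lambertSeries_neg (k : ℝ) {q : ℂ} (hq : ‖q‖ < 1) :
    lambertSeries k q + lambertSeries k (-q) =
      (2 + (((2 : ℝ) ^ (1 - k) : ℝ) : ℂ)) * lambertSeries k (q ^ 2)
        - (((2 : ℝ) ^ (1 - k) : ℝ) : ℂ) * lambertSeries k (q ^ 4) := by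
  have hq2 : ‖q ^ 2‖ < 1 := by rw [norm_pow]; exact pow_lt_one₀ (norm_nonneg q) hq two_ne_zero
  have hs_neg : Summable (lambertTerm k (-q)) := summable_lambertTerm k (by rwa [norm_neg])
  rw [lambertSeries, lambertSeries, ← (summable_lambertTerm k hq).tsum_add hs_neg,
    ((summable_lambertTerm k hq).add hs_neg).tsum_eq_tsum_even_add_tsum_odd]
  simp only [lambertTerm_add_lambertTerm_neg_two_mul,
    lambertTerm_add_lambertTerm_neg_two_mul_add_one k hq, tsum_mul_left]
  rw [tsum_lambertTerm_two_mul_add_one k hq2, ← pow_mul, ← lambertSeries, ofReal_two_rpow_one_sub]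
  ring

lemma cexp_two_pi_I_mul_add_quarter (z : ℂ) :
    cexp (2 * Real.pi * I * (z + 1 / 4)) = I * cexp (2 * Real.pi * I * z) := by
  rw [show 2 * Real.pi * I * (z + 1 / 4) = 2 * Real.pi * I * z + Real.pi / 2 * I by ring,
    Complex.exp_add, exp_pi_div_two_mul_I, mul_comm]

lemma cexp_two_pi_I_mul_sub_quarter (z : ℂ) :
    cexp (2 * Real.pi * I * (z - 1 / 4)) = -(I * cexp (2 * Real.pi * I * z)) := by
  rw [show 2 * Real.pi * I * (z - 1 / 4) = 2 * Real.pi * I * z - Real.pi / 2 * I by ring,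
    Complex.exp_sub, exp_pi_div_two_mul_I, div_I]
  ring

lemma P_ofNat_mul (k : ℝ) (n : ℕ) [n.AtLeastTwo] (z : ℂ) :
    P k (ofNat(n) * z) = lambertSeries k (cexp (2 * Real.pi * I * z) ^ (ofNat(n) : ℕ)) := by
  rw [P_eq_lambertSeries, ← Complex.exp_nat_mul, Nat.cast_ofNat]
  ring_nf

theorem quadrupling (k : ℝ) (z : ℂ) (hz : 0 < z.im) :
    P k (z - 1 / 4) + P k (z + 1 / 4) =
      ((2 + (((2 : ℝ) ^ (1 - k) : ℝ) : ℂ)) ^ 2 - (((2 : ℝ) ^ (1 - k) : ℝ) : ℂ)) * P k (4 * z)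
        - (2 + (((2 : ℝ) ^ (1 - k) : ℝ) : ℂ)) *
            (P k (2 * z) + (((2 : ℝ) ^ (1 - k) : ℝ) : ℂ) * P k (8 * z)) := by
  set q := cexp (2 * Real.pi * I * z)
  have hq : ‖q‖ < 1 := UpperHalfPlane.norm_exp_two_pi_I_lt_one ⟨z, hz⟩
  have hq2 : ‖q ^ 2‖ < 1 := by rw [norm_pow]; exact pow_lt_one₀ (norm_nonneg q) hq two_ne_zero
  have hIq : ‖I * q‖ < 1 := by rwa [norm_mul, norm_I, one_mul]
  have h_iq := lambertSeries_add_lambertSeries_neg k hIq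
  have h_q2 := lambertSeries_add_lambertSeries_neg k hq2
  rw [mul_pow, mul_pow, I_sq, I_pow_four, neg_one_mul, one_mul] at h_iq
  rw [← pow_mul, ← pow_mul] at h_q2
  rw [P_eq_lambertSeries, P_eq_lambertSeries, cexp_two_pi_I_mul_add_quarter,
    cexp_two_pi_I_mul_sub_quarter, add_comm, h_iq, P_ofNat_mul, P_ofNat_mul, P_ofNat_mul]
  linear_combination (2 + (((2 : ℝ) ^ (1 - k) : ℝ) : ℂ)) * h_q2
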